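/- Let 0 < γ ≤ 14/15 and Γ = 6γ/7. At every point of a type VIII solution of the tilted Bianchi type VIII dynamical system with Ω > 0 and 0 < V² < 1, one has 2(1−Γ)q + (2+2Γ−3γ) + Γ·(W/V²) ≥ (1/7)(14−15γ)·(2Σ² + (1/4)N₁² − N₁N̄ + |N×|²) + γ·(18(1−γ) + (10−9γ)V²)·Ω/(7G₊); in particular, the function Z₁ = (1−V²)^((2−γ)/2) · Ω^(1−Γ) / (G₊^(1−Γ) · V^Γ) is strictly increasing along such a solution. -/

import Mathlib

noncomputable section

open Complex Filter

/-- State of the tilted Bianchi type VIII dynamical system (F-gauge):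
real variables `Sp`, `Nb` (= N̄), `N1`, `Om`, `v1` and complex variables
`Sx` (= Σ×), `S1`, `Nx` (= N×), `v`, all functions of the dynamical time τ. -/
structure BianchiVIII (γ : ℝ) (I : Set ℝ) where
  Sp : ℝ → ℝ
  Sx : ℝ → ℂ
  S1 : ℝ → ℂ
  Nx : ℝ → ℂ
  Nb : ℝ → ℝ
  N1 : ℝ → ℝ
  Om : ℝ → ℝ
  v1 : ℝ → ℝ
  v : ℝ → ℂ

namespace BianchiVIII

variable {γ : ℝ} {I : Set ℝ}

/-- Σ² = Σ₊² + |Σ×|² + |Σ₁|² -/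
def Sig2 (S : BianchiVIII γ I) (τ : ℝ) : ℝ :=
  S.Sp τ ^ 2 + ‖S.Sx τ‖ ^ 2 + ‖S.S1 τ‖ ^ 2

/-- V² = v₁² + |v|² -/
def V2 (S : BianchiVIII γ I) (τ : ℝ) : ℝ :=
  S.v1 τ ^ 2 + ‖S.v τ‖ ^ 2

/-- The tilt speed V = √(V²). -/
def V (S : BianchiVIII γ I) (τ : ℝ) : ℝ := Real.sqrt (S.V2 τ)

/-- G₊ = 1 + (γ−1)V² -/
def Gp (S : BianchiVIII γ I) (τ : ℝ) : ℝ := 1 + (γ - 1) * S.V2 τ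

/-- Deceleration parameter q = 2Σ² + (1/2)((3γ−2)+(2−γ)V²)Om/G₊ -/
def q (S : BianchiVIII γ I) (τ : ℝ) : ℝ :=
  2 * S.Sig2 τ + (1/2) * ((3*γ - 2) + (2 - γ) * S.V2 τ) * S.Om τ / S.Gp τ

/-- W = V²𝒮 = Σ₊(−2v₁² + |v|²) + 2√3 v₁ Re(conj(Σ₁) v) + √3 Re(Σ× conj(v)²) -/
def W (S : BianchiVIII γ I) (τ : ℝ) : ℝ :=
  S.Sp τ * (-2 * S.v1 τ ^ 2 + ‖S.v τ‖ ^ 2)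
    + 2 * Real.sqrt 3 * S.v1 τ * ((starRingEnd ℂ) (S.S1 τ) * S.v τ).re
    + Real.sqrt 3 * (S.Sx τ * ((starRingEnd ℂ) (S.v τ)) ^ 2).re

/-- T = ((3γ−4)(1−V²) + (2−γ)W)/(1−(γ−1)V²) -/
def T (S : BianchiVIII γ I) (τ : ℝ) : ℝ :=
  ((3*γ - 4) * (1 - S.V2 τ) + (2 - γ) * S.W τ) / (1 - (γ - 1) * S.V2 τ)

/-- a = (N̄²−N₁²−|N×|²)/((N̄−N₁)²−|N×|²) -/
def a (S : BianchiVIII γ I) (τ : ℝ) : ℝ :=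
  (S.Nb τ ^ 2 - S.N1 τ ^ 2 - ‖S.Nx τ‖ ^ 2) /
    ((S.Nb τ - S.N1 τ) ^ 2 - ‖S.Nx τ‖ ^ 2)

/-- b = −2N₁N×/((N̄−N₁)²−|N×|²) -/
def b (S : BianchiVIII γ I) (τ : ℝ) : ℂ :=
  ((-2 * S.N1 τ : ℝ) : ℂ) * S.Nx τ /
    (((S.Nb τ - S.N1 τ) ^ 2 - ‖S.Nx τ‖ ^ 2 : ℝ) : ℂ)

/-- R = aΣ₁ + b·conj(Σ₁) -/
def R (S : BianchiVIII γ I) (τ : ℝ) : ℂ :=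
  (S.a τ : ℂ) * S.S1 τ + S.b τ * (starRingEnd ℂ) (S.S1 τ)

/-- The evolution equations and the constraints of the tilted Bianchi
type VIII dynamical system, holding at each τ in the interval `I`. -/
structure IsSolution (S : BianchiVIII γ I) : Prop where
  hSp : ∀ τ ∈ I, HasDerivAt S.Sp
    ((S.q τ - 2) * S.Sp τ + 3 * ((starRingEnd ℂ) (S.R τ) * S.S1 τ).re
      - S.N1 τ * S.Nb τ - 2 * ‖S.Nx τ‖ ^ 2
      + γ * S.Om τ / (2 * S.Gp τ) * (-2 * S.v1 τ ^ 2 + ‖S.v τ‖ ^ 2)) τ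
  hSx : ∀ τ ∈ I, HasDerivAt S.Sx
    (((S.q τ - 2 : ℝ) : ℂ) * S.Sx τ + (Real.sqrt 3 : ℂ) * S.S1 τ * S.R τ
      - (Real.sqrt 3 : ℂ) * S.Nx τ * ((2 * S.Nb τ - S.N1 τ : ℝ) : ℂ)
      + ((Real.sqrt 3 * γ * S.Om τ / (2 * S.Gp τ) : ℝ) : ℂ) * (S.v τ) ^ 2) τ
  hS1 : ∀ τ ∈ I, HasDerivAt S.S1
    (((S.q τ - 2 : ℝ) : ℂ) * S.S1 τ - ((3 * S.Sp τ : ℝ) : ℂ) * S.R τ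
      - (Real.sqrt 3 : ℂ) * S.Sx τ * (starRingEnd ℂ) (S.R τ)
      + ((Real.sqrt 3 * γ * S.Om τ * S.v1 τ / S.Gp τ : ℝ) : ℂ) * S.v τ) τ
  hNx : ∀ τ ∈ I, HasDerivAt S.Nx
    (((S.q τ + 2 * S.Sp τ : ℝ) : ℂ) * S.Nx τ
      + ((2 * Real.sqrt 3 : ℝ) : ℂ) * S.Sx τ * ((S.Nb τ : ℝ) : ℂ)) τ
  hNb : ∀ τ ∈ I, HasDerivAt S.Nb
    ((S.q τ + 2 * S.Sp τ) * S.Nb τ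
      + 2 * Real.sqrt 3 * ((starRingEnd ℂ) (S.Sx τ) * S.Nx τ).re) τ
  hN1 : ∀ τ ∈ I, HasDerivAt S.N1 ((S.q τ - 4 * S.Sp τ) * S.N1 τ) τ
  hOm : ∀ τ ∈ I, HasDerivAt S.Om
    (S.Om τ / S.Gp τ * (2 * S.q τ - (3*γ - 2)
      + (2 * S.q τ * (γ - 1) - (2 - γ)) * S.V2 τ - γ * S.W τ)) τ
  hv1 : ∀ τ ∈ I, HasDerivAt S.v1
    ((S.T τ + 2 * S.Sp τ) * S.v1 τ
      - Real.sqrt 3 * ((S.R τ + S.S1 τ) * (starRingEnd ℂ) (S.v τ)).re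
      + Real.sqrt 3 * ((starRingEnd ℂ) (S.Nx τ) * (S.v τ) ^ 2).im) τ
  hv : ∀ τ ∈ I, HasDerivAt S.v
    ((((S.T τ - S.Sp τ : ℝ) : ℂ)
        - Complex.I * (Real.sqrt 3 : ℂ) * ((S.Nb τ - S.N1 τ : ℝ) : ℂ) * (S.v1 τ : ℂ)) * S.v τ
      - (Real.sqrt 3 : ℂ) * (S.Sx τ + Complex.I * S.Nx τ * (S.v1 τ : ℂ)) * (starRingEnd ℂ) (S.v τ)
      - (Real.sqrt 3 : ℂ) * (S.S1 τ - S.R τ) * (S.v1 τ : ℂ)) τ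
  hC1 : ∀ τ ∈ I, 1 = S.Sig2 τ + (1/4) * S.N1 τ ^ 2 - S.N1 τ * S.Nb τ
      + ‖S.Nx τ‖ ^ 2 + S.Om τ
  hC2 : ∀ τ ∈ I, 0 = 2 * ((starRingEnd ℂ) (S.Sx τ) * S.Nx τ).im
      + γ * S.Om τ * S.v1 τ / S.Gp τ
  hC3 : ∀ τ ∈ I, (0 : ℂ) = Complex.I * S.S1 τ * ((S.Nb τ - S.N1 τ : ℝ) : ℂ)
      + Complex.I * (starRingEnd ℂ) (S.S1 τ) * S.Nx τ
      + ((γ * S.Om τ / S.Gp τ : ℝ) : ℂ) * S.v τ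

/-- Type VIII conditions: N₁ < 0, N̄ > 0, N̄² − |N×|² > 0, Om ≥ 0, V² < 1. -/
def IsTypeVIII (S : BianchiVIII γ I) : Prop :=
  ∀ τ ∈ I, S.N1 τ < 0 ∧ 0 < S.Nb τ ∧ 0 < S.Nb τ ^ 2 - ‖S.Nx τ‖ ^ 2
    ∧ 0 ≤ S.Om τ ∧ S.V2 τ < 1

/-- D = N₁v₁² + N̄|v|² + Re(conj(N×) v²) -/
def D (S : BianchiVIII γ I) (τ : ℝ) : ℝ :=
  S.N1 τ * S.v1 τ ^ 2 + S.Nb τ * ‖S.v τ‖ ^ 2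
    + ((starRingEnd ℂ) (S.Nx τ) * (S.v τ) ^ 2).re

end BianchiVIII

/-- Z₁ = (1−V²)^((2−γ)/2) · Ω^(1−Γ) / (G₊^(1−Γ) · V^Γ), with Γ = 6γ/7. -/
noncomputable def Z1 {γ : ℝ} {I : Set ℝ} (S : BianchiVIII γ I) (τ : ℝ) : ℝ :=
  (1 - S.V2 τ) ^ ((2 - γ)/2) * S.Om τ ^ (1 - 6*γ/7) /
    (S.Gp τ ^ (1 - 6*γ/7) * S.V τ ^ (6*γ/7))

/-!
Along a solution, `Z₁' = Z₁ · (2(1−Γ)q + 2 + 2Γ − 3γ + Γ W/V²)`. By the Hamiltonian constraint,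
this rate exceeds the claimed bound by `((14−9γ)Σ²V² + 6γV² + 6γW)/(7V²)`. The term `W` is the
quadratic form of a trace-free 3×3 shear matrix of Frobenius norm `√6 Σ` on the tilt vector, so
Cauchy–Schwarz against `w wᵀ − |w|² I/3` gives `|W| ≤ 2ΣV²`. The numerator is therefore at least
`V²((14−9γ)Σ² − 12γΣ + 6γ)`, a quadratic in `Σ` with discriminant `24γ(15γ−14) ≤ 0`. For type VIII
the bound is positive, so `Z₁` is strictly increasing.
-/

open Finset Matrix in
theorem Matrix.sq_dotProduct_mulVec_le_of_trace_eq_zero {n : Type*} [Fintype n] [DecidableEq n]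
    (M : Matrix n n ℝ) (hM : M.trace = 0) (w : n → ℝ) :
    (w ⬝ᵥ M *ᵥ w) ^ 2
      ≤ (∑ i, ∑ j, M i j ^ 2) * ((1 - 1 / Fintype.card n) * (w ⬝ᵥ w) ^ 2) := by
  set s := w ⬝ᵥ w
  set c := s / Fintype.card n
  set E : n → n → ℝ := fun i j => w i * w j - if i = j then c else 0
  have hform : w ⬝ᵥ M *ᵥ w = ∑ i, ∑ j, M i j * E i j := by
    have htr : ∑ i, ∑ j, M i j * (if i = j then c else 0) = c * M.trace := by
      simp [Matrix.trace, mul_sum, mul_comm]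
    simp only [E, mul_sub, sum_sub_distrib, htr, hM, mul_zero, sub_zero, dotProduct,
      mulVec, mul_sum]
    exact sum_congr rfl fun i _ => sum_congr rfl fun j _ => by ring
  have hE : ∑ i, ∑ j, E i j ^ 2 = (1 - 1 / Fintype.card n) * s ^ 2 := by
    have : ∑ i, ∑ j, E i j ^ 2 = s ^ 2 - 2 * c * s + Fintype.card n * c ^ 2 := by
      simp only [E, sub_sq, sum_add_distrib, sum_sub_distrib]
      simp only [sq, mul_mul_mul_comm, mul_ite, mul_zero, sum_ite_eq, mem_univ, ↓reduceIte,
        ite_pow, sum_const, card_univ, nsmul_eq_mul, dotProduct, mul_sum, sum_mul, add_left_inj, s]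
      exact congrArg₂ (· - ·) (sum_congr rfl fun i _ => sum_congr rfl fun j _ => by ring)
        (sum_congr rfl fun i _ => by ring)
    rw [this]
    rcases eq_or_ne (Fintype.card n : ℝ) 0 with h | h
    · simp [c, h]
    · simp only [c]; field_simp; ring
  rw [hform, ← hE]
  have := sum_mul_sq_le_sq_mul_sq (univ ×ˢ univ) (fun x : n × n => M x.1 x.2)
    (fun x => E x.1 x.2)
  simpa only [sum_product] using this

theorem HasDerivAt.rpow_const_of_pos {f : ℝ → ℝ} {f' x : ℝ} (hf : HasDerivAt f f' x)
    (hx : 0 < f x) (p : ℝ) : HasDerivAt (fun t => f t ^ p) (f x ^ p * (p * (f' / f x))) x := by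
  convert hf.rpow_const (p := p) (Or.inl hx.ne') using 1
  rw [Real.rpow_sub_one hx.ne']
  ring

theorem HasDerivAt.mul_of_logDeriv {f g : ℝ → ℝ} {r s x : ℝ} (hf : HasDerivAt f (f x * r) x)
    (hg : HasDerivAt g (g x * s) x) :
    HasDerivAt (fun t => f t * g t) (f x * g x * (r + s)) x :=
  (hf.mul hg).congr_deriv (by ring)

theorem HasDerivAt.div_of_logDeriv {f g : ℝ → ℝ} {r s x : ℝ} (hf : HasDerivAt f (f x * r) x)
    (hg : HasDerivAt g (g x * s) x) (hx : g x ≠ 0) :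
    HasDerivAt (fun t => f t / g t) (f x / g x * (r - s)) x :=
  (hf.div hg hx).congr_deriv (by field_simp)

namespace BianchiVIII

open Matrix

variable {γ : ℝ} {I : Set ℝ} (S : BianchiVIII γ I) (τ : ℝ)

def shearMatrix : Matrix (Fin 3) (Fin 3) ℝ :=
  !![-2 * S.Sp τ, Real.sqrt 3 * (S.S1 τ).re, Real.sqrt 3 * (S.S1 τ).im;
     Real.sqrt 3 * (S.S1 τ).re, S.Sp τ + Real.sqrt 3 * (S.Sx τ).re, Real.sqrt 3 * (S.Sx τ).im;
     Real.sqrt 3 * (S.S1 τ).im, Real.sqrt 3 * (S.Sx τ).im, S.Sp τ - Real.sqrt 3 * (S.Sx τ).re]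

def tiltVector : Fin 3 → ℝ := ![S.v1 τ, (S.v τ).re, (S.v τ).im]

theorem trace_shearMatrix : (S.shearMatrix τ).trace = 0 := by
  simp only [trace, shearMatrix, diag_apply, of_apply, cons_val', cons_val_fin_one,
    Fin.sum_univ_three, Fin.isValue, cons_val_zero, cons_val_one, cons_val]
  ring

theorem sum_sq_shearMatrix : ∑ i, ∑ j, S.shearMatrix τ i j ^ 2 = 6 * S.Sig2 τ := by
  have h3 : Real.sqrt 3 ^ 2 = 3 := Real.sq_sqrt (by norm_num)
  simp only [shearMatrix, of_apply, cons_val', cons_val_fin_one, Fin.sum_univ_three, Fin.isValue,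
    cons_val_zero, cons_val_one, cons_val, Sig2, Complex.sq_norm, Complex.normSq_apply]
  linear_combination (2 * (S.Sx τ).re ^ 2 + 2 * (S.Sx τ).im ^ 2 + 2 * (S.S1 τ).re ^ 2
    + 2 * (S.S1 τ).im ^ 2) * h3

theorem dotProduct_tiltVector : S.tiltVector τ ⬝ᵥ S.tiltVector τ = S.V2 τ := by
  simp only [dotProduct, tiltVector, Fin.sum_univ_three, Fin.isValue, cons_val_zero,
    cons_val_one, cons_val, V2, Complex.sq_norm, Complex.normSq_apply]
  ring

theorem W_eq_dotProduct_mulVec :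
    S.W τ = S.tiltVector τ ⬝ᵥ S.shearMatrix τ *ᵥ S.tiltVector τ := by
  rw [W, Complex.sq_norm, Complex.normSq_apply]
  simp only [Complex.mul_re, Complex.conj_re, Complex.conj_im, sq, Complex.mul_im, dotProduct,
    tiltVector, mulVec, shearMatrix, of_apply, cons_val', cons_val_fin_one, Fin.sum_univ_three,
    Fin.isValue, cons_val_zero, cons_val_one, cons_val]
  ring

theorem sq_W_le : S.W τ ^ 2 ≤ 4 * S.Sig2 τ * S.V2 τ ^ 2 := by
  have := (S.shearMatrix τ).sq_dotProduct_mulVec_le_of_trace_eq_zero (S.trace_shearMatrix τ)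
    (S.tiltVector τ)
  rw [sum_sq_shearMatrix, dotProduct_tiltVector, ← W_eq_dotProduct_mulVec] at this
  norm_num at this
  linarith

theorem Sig2_nonneg : 0 ≤ S.Sig2 τ := by
  unfold Sig2; positivity

theorem V2_nonneg : 0 ≤ S.V2 τ := by
  unfold V2; positivity

theorem Gp_pos (hγ : 0 < γ) (hV : S.V2 τ < 1) : 0 < S.Gp τ := by
  have := S.V2_nonneg τ
  unfold Gp; nlinarith

variable {S} in
theorem IsSolution.hasDerivAt_V2 (hsol : S.IsSolution) {τ : ℝ} (hτ : τ ∈ I) :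
    HasDerivAt S.V2 (2 * (S.T τ * S.V2 τ - S.W τ)) τ := by
  refine (((hsol.hv1 τ hτ).pow 2).add (hsol.hv τ hτ).norm_sq).congr_deriv ?_
  rw [Complex.inner]
  simp only [V2, W, Complex.sq_norm, Complex.normSq_apply]
  simp only [Nat.cast_ofNat, Nat.add_one_sub_one, pow_one, sq, Complex.mul_re, Complex.add_re,
    Complex.add_im, Complex.sub_re, Complex.sub_im, Complex.mul_im, Complex.conj_re,
    Complex.conj_im, Complex.ofReal_re, Complex.ofReal_im, Complex.I_re, Complex.I_im]
  ring

theorem Z1_eq : Z1 S = fun t => (1 - S.V2 t) ^ ((2 - γ) / 2) * S.Om t ^ (1 - 6 * γ / 7) /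
    (S.Gp t ^ (1 - 6 * γ / 7) * S.V2 t ^ (3 * γ / 7)) := by
  ext t
  rw [Z1, V, Real.sqrt_eq_rpow, ← Real.rpow_mul (S.V2_nonneg t)]
  ring_nf

def Z1Rate : ℝ :=
  2 * (1 - 6*γ/7) * S.q τ + (2 + 2*(6*γ/7) - 3*γ) + (6*γ/7) * (S.W τ / S.V2 τ)

variable {S} in
theorem IsSolution.hasDerivAt_Z1 (hsol : S.IsSolution) (hγ0 : 0 < γ) (hγ2 : γ < 2) {τ : ℝ}
    (hτ : τ ∈ I) (hΩ : 0 < S.Om τ) (hV0 : 0 < S.V2 τ) (hV1 : S.V2 τ < 1) :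
    HasDerivAt (Z1 S) (Z1 S τ * S.Z1Rate τ) τ := by
  have hV2 := hsol.hasDerivAt_V2 hτ
  have hG := S.Gp_pos τ hγ0 hV1
  have hA := (hV2.const_sub 1).rpow_const_of_pos (by linarith) ((2 - γ) / 2)
  have hB := (hsol.hOm τ hτ).rpow_const_of_pos hΩ (1 - 6 * γ / 7)
  have hC := ((hV2.const_mul (γ - 1)).const_add 1).rpow_const_of_pos hG (1 - 6 * γ / 7)
  have hD := hV2.rpow_const_of_pos hV0 (3 * γ / 7)
  rw [Z1_eq]
  refine ((hA.mul_of_logDeriv hB).div_of_logDeriv (hC.mul_of_logDeriv hD)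
    (by positivity)).congr_deriv ?_
  congr 1
  have h2G : 2 - S.Gp τ ≠ 0 := by unfold Gp; nlinarith
  have hT : S.T τ = ((3 * γ - 4) * (1 - S.V2 τ) + (2 - γ) * S.W τ) / (2 - S.Gp τ) := by
    rw [T, Gp]; ring_nf
  have h1 : 1 - S.V2 τ ≠ 0 := by linarith
  have hG' : 1 + (γ - 1) * S.V2 τ = S.Gp τ := rfl
  simp only [Z1Rate, hT, q, hG']
  field_simp
  simp only [Gp]
  ring

theorem Z1_pos (hγ : 0 < γ) (hΩ : 0 < S.Om τ) (hV0 : 0 < S.V2 τ) (hV1 : S.V2 τ < 1) :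
    0 < Z1 S τ := by
  have hG := S.Gp_pos τ hγ hV1
  have h1 : 0 < 1 - S.V2 τ := by linarith
  rw [Z1_eq]
  exact div_pos (mul_pos (Real.rpow_pos_of_pos h1 _) (Real.rpow_pos_of_pos hΩ _))
    (mul_pos (Real.rpow_pos_of_pos hG _) (Real.rpow_pos_of_pos hV0 _))

def Z1RateBound : ℝ :=
  (1/7) * (14 - 15*γ) * (2 * S.Sig2 τ + (1/4) * S.N1 τ ^ 2
      - S.N1 τ * S.Nb τ + ‖S.Nx τ‖ ^ 2)
    + γ * (18 * (1 - γ) + (10 - 9*γ) * S.V2 τ) * S.Om τ / (7 * S.Gp τ)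

variable {S} in
theorem IsSolution.Z1Rate_sub_Z1RateBound (hsol : S.IsSolution) {τ : ℝ} (hτ : τ ∈ I)
    (hV : S.V2 τ ≠ 0) (hG : S.Gp τ ≠ 0) :
    S.Z1Rate τ - S.Z1RateBound τ
      = ((14 - 9*γ) * S.Sig2 τ * S.V2 τ + 6*γ * S.V2 τ + 6*γ * S.W τ) / (7 * S.V2 τ) := by
  have hK : 2 * S.Sig2 τ + (1/4) * S.N1 τ ^ 2 - S.N1 τ * S.Nb τ + ‖S.Nx τ‖ ^ 2
      = S.Sig2 τ + 1 - S.Om τ := by linarith [hsol.hC1 τ hτ]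
  simp only [Z1Rate, Z1RateBound, q, hK]
  field_simp
  unfold Gp
  ring

variable {S} in
theorem IsSolution.Z1RateBound_le_Z1Rate (hsol : S.IsSolution) (hγ0 : 0 < γ)
    (hγ1 : γ ≤ 14/15) {τ : ℝ} (hτ : τ ∈ I) (hV0 : 0 < S.V2 τ) (hV1 : S.V2 τ < 1) :
    S.Z1RateBound τ ≤ S.Z1Rate τ := by
  set σ := Real.sqrt (S.Sig2 τ)
  have hσ : S.Sig2 τ = σ ^ 2 := (Real.sq_sqrt (S.Sig2_nonneg τ)).symm
  have hW : -(2 * σ * S.V2 τ) ≤ S.W τ := by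
    refine (abs_le_of_sq_le_sq' ?_ (by positivity)).1
    linear_combination S.sq_W_le τ + 4 * S.V2 τ ^ 2 * hσ
  have hquad : 0 ≤ (14 - 9*γ) * σ ^ 2 - 12*γ * σ + 6*γ := by
    nlinarith [sq_nonneg ((14 - 9*γ) * σ - 6*γ),
      mul_nonneg hγ0.le (by linarith : 0 ≤ 14 - 15*γ)]
  have hnum : 0 ≤ (14 - 9*γ) * S.Sig2 τ * S.V2 τ + 6*γ * S.V2 τ + 6*γ * S.W τ := by
    rw [hσ]
    nlinarith [mul_nonneg hV0.le hquad, mul_le_mul_of_nonneg_left hW (by positivity : 0 ≤ 6*γ)]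
  rw [← sub_nonneg, hsol.Z1Rate_sub_Z1RateBound hτ hV0.ne' (S.Gp_pos τ hγ0 hV1).ne']
  positivity

variable {S} in
theorem IsTypeVIII.Z1RateBound_pos (hVIII : S.IsTypeVIII) (hγ0 : 0 < γ) (hγ1 : γ ≤ 14/15)
    {τ : ℝ} (hτ : τ ∈ I) (hΩ : 0 < S.Om τ) : 0 < S.Z1RateBound τ := by
  obtain ⟨hN1, hNb, -, -, hV1⟩ := hVIII τ hτ
  have hG := S.Gp_pos τ hγ0 hV1
  have hV0 := S.V2_nonneg τ
  have hcurv : 0 ≤ 2 * S.Sig2 τ + (1/4) * S.N1 τ ^ 2 - S.N1 τ * S.Nb τ + ‖S.Nx τ‖ ^ 2 := by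
    nlinarith [S.Sig2_nonneg τ, mul_pos (neg_pos.mpr hN1) hNb, sq_nonneg (S.N1 τ),
      sq_nonneg ‖S.Nx τ‖]
  have hfluid : 0 < γ * (18 * (1 - γ) + (10 - 9*γ) * S.V2 τ) * S.Om τ / (7 * S.Gp τ) := by
    have : 0 < 18 * (1 - γ) + (10 - 9*γ) * S.V2 τ := by nlinarith
    positivity
  unfold Z1RateBound
  nlinarith [mul_nonneg (by linarith : (0:ℝ) ≤ 14 - 15*γ) hcurv]

end BianchiVIII

/-- For 0 < γ ≤ 14/15, Γ = 6γ/7, at every point of a type VIII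
solution with Ω > 0 and 0 < V² < 1, the growth factor of Z₁ is bounded below
by (1/7)(14−15γ)(2Σ² + (1/4)N₁² − N₁N̄ + |N×|²) + γ(18(1−γ)+(10−9γ)V²)Ω/(7G₊);
in particular Z₁ is strictly increasing along the solution. -/
theorem bianchiVIII_Z1_monotone (γ : ℝ) (hγ0 : 0 < γ) (hγ1 : γ ≤ 14/15)
    (τ₀ : ℝ) (S : BianchiVIII γ (Set.Ici τ₀))
    (hsol : S.IsSolution) (hVIII : S.IsTypeVIII)
    (hOm : ∀ τ ∈ Set.Ici τ₀, 0 < S.Om τ)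
    (hV : ∀ τ ∈ Set.Ici τ₀, 0 < S.V2 τ ∧ S.V2 τ < 1) :
    (∀ τ ∈ Set.Ici τ₀,
      (1/7) * (14 - 15*γ) * (2 * S.Sig2 τ + (1/4) * S.N1 τ ^ 2
          - S.N1 τ * S.Nb τ + ‖S.Nx τ‖ ^ 2)
        + γ * (18 * (1 - γ) + (10 - 9*γ) * S.V2 τ) * S.Om τ / (7 * S.Gp τ)
      ≤ 2 * (1 - 6*γ/7) * S.q τ + (2 + 2*(6*γ/7) - 3*γ)
        + (6*γ/7) * (S.W τ / S.V2 τ)) ∧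
    StrictMonoOn (Z1 S) (Set.Ici τ₀) := by
  have hbound (τ) (hτ : τ ∈ Set.Ici τ₀) : S.Z1RateBound τ ≤ S.Z1Rate τ :=
    hsol.Z1RateBound_le_Z1Rate hγ0 hγ1 hτ (hV τ hτ).1 (hV τ hτ).2
  have hderiv (τ) (hτ : τ ∈ Set.Ici τ₀) : HasDerivAt (Z1 S) (Z1 S τ * S.Z1Rate τ) τ :=
    hsol.hasDerivAt_Z1 hγ0 (by linarith) hτ (hOm τ hτ) (hV τ hτ).1 (hV τ hτ).2
  refine ⟨hbound, strictMonoOn_of_hasDerivWithinAt_pos (convex_Ici τ₀)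
    (fun τ hτ => (hderiv τ hτ).continuousAt.continuousWithinAt)
    (fun τ hτ => (hderiv τ (interior_subset hτ)).hasDerivWithinAt) fun τ hτ => ?_⟩
  replace hτ := interior_subset hτ
  exact mul_pos (S.Z1_pos τ hγ0 (hOm τ hτ) (hV τ hτ).1 (hV τ hτ).2)
    ((hVIII.Z1RateBound_pos hγ0 hγ1 hτ (hOm τ hτ)).trans_le (hbound τ hτ))
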